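/- arXiv:2410.04649 — 3 statements merged into one kernel-verified Lean document; each statement's English description precedes it below -/
import Mathlib

section
/- Let p be a prime and let p_1, …, p_r be distinct prime divisors of p − 1. Let n be a positive integer not divisible by p which is simultaneously a p_i-th power nonresidue modulo p for every i = 1, …, r, and let d_1 < d_2 < ⋯ < d_t be divisors of n with t > 2^r · ∏_{i : p_i > 2} p_i/(p_i − 1). Then there exist indices i, j with 1 ≤ i < j ≤ t such that the integer n′ = n·d_i/d_j (an integer since d_j divides n) is also simultaneously a p_1, …, p_r-th power nonresidue modulo p. -/
open Real Finset

/-- `n` is a `q`-th power residue modulo `p`: `n ≡ m^q (mod p)` for some integer `m`. -/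
def IsResidue (p q : ℕ) (n : ℤ) : Prop := ∃ m : ℤ, m ^ q ≡ n [ZMOD (p : ℤ)]

/-- `n` is a `q`-th power nonresidue modulo `p`: `n` is not divisible by `p`
and is not a `q`-th power residue modulo `p`. -/
def IsNonresidue (p q : ℕ) (n : ℤ) : Prop := ¬ (p : ℤ) ∣ n ∧ ¬ IsResidue p q n

theorem combinatorial_nonresidue_lemma
    (p : ℕ) (hp : p.Prime) (S : Finset ℕ) (hS : S ⊆ (p - 1).primeFactors)
    (n : ℕ) (hn : 0 < n)
    (hnon : ∀ q ∈ S, IsNonresidue p q (n : ℤ))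
    (t : ℕ) (d : ℕ → ℕ)
    (hdvd : ∀ i < t, d i ∣ n)
    (hmono : ∀ i j, i < j → j < t → d i < d j)
    (ht : (2 : ℝ) ^ S.card * ∏ q ∈ S.filter (fun q => 2 < q), (q : ℝ) / ((q : ℝ) - 1)
            < (t : ℝ)) :
    ∃ i j, i < j ∧ j < t ∧ ∀ q ∈ S, IsNonresidue p q ((n * d i / d j : ℕ) : ℤ) := by
  classical
  rcases S.eq_empty_or_nonempty with hSe | hSne
  · subst hSe
    simp only [Finset.card_empty, pow_zero, Finset.filter_empty, Finset.prod_empty, mul_one] at ht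
    have h2t : 1 < t := by exact_mod_cast ht
    exact ⟨0, 1, zero_lt_one, h2t, fun q hq => absurd hq (Finset.notMem_empty q)⟩
  obtain ⟨q0, hq0⟩ := hSne
  haveI hFp : Fact p.Prime := ⟨hp⟩
  have hpn : ¬ (p : ℤ) ∣ (n : ℤ) := (hnon q0 hq0).1
  obtain ⟨g, hg⟩ := IsCyclic.exists_generator (α := (ZMod p)ˣ)
  have hord : orderOf g = p - 1 := by
    rw [orderOf_eq_card_of_forall_mem_zpowers hg, Nat.card_eq_fintype_card,
      ZMod.card_units_eq_totient, Nat.totient_prime hp]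
  choose dlog hdlog using fun u : (ZMod p)ˣ => Subgroup.mem_zpowers_iff.mp (hg u)
  have hq_prime : ∀ q ∈ S, q.Prime := fun q hq => Nat.prime_of_mem_primeFactors (hS hq)
  have hq_dvd : ∀ q ∈ S, q ∣ p - 1 := fun q hq => Nat.dvd_of_mem_primeFactors (hS hq)
  -- key: equal powers of g give equal casts mod q
  have key : ∀ q ∈ S, ∀ a b : ℤ, g ^ a = g ^ b → ((a : ZMod q) = (b : ZMod q)) := by
    intro q hq a b hab
    have h1 : g ^ (a - b) = 1 := by rw [zpow_sub, hab, mul_inv_cancel]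
    have h2 : ((p - 1 : ℕ) : ℤ) ∣ a - b := by
      rw [← hord]; exact orderOf_dvd_iff_zpow_eq_one.mpr h1
    have h3 : (q : ℤ) ∣ a - b := dvd_trans (Int.natCast_dvd_natCast.mpr (hq_dvd q hq)) h2
    rw [ZMod.intCast_eq_intCast_iff]
    exact (Int.modEq_iff_dvd.mpr h3).symm
  -- φ is additive
  have φ_mul : ∀ q ∈ S, ∀ u v : (ZMod p)ˣ,
      ((dlog (u * v) : ℤ) : ZMod q) = ((dlog u : ℤ) : ZMod q) + ((dlog v : ℤ) : ZMod q) := by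
    intro q hq u v
    have h1 : g ^ dlog (u * v) = g ^ (dlog u + dlog v) := by
      rw [hdlog, zpow_add, hdlog, hdlog]
    have := key q hq _ _ h1
    rw [this]; push_cast; ring
  have φ_one : ∀ q ∈ S, ((dlog 1 : ℤ) : ZMod q) = 0 := by
    intro q hq
    have h1 : g ^ dlog 1 = g ^ (0 : ℤ) := by rw [hdlog, zpow_zero]
    have := key q hq _ _ h1
    rw [this]; simp
  have φ_inv : ∀ q ∈ S, ∀ u : (ZMod p)ˣ,
      ((dlog u⁻¹ : ℤ) : ZMod q) = - ((dlog u : ℤ) : ZMod q) := by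
    intro q hq u
    have := φ_mul q hq u u⁻¹
    rw [mul_inv_cancel, φ_one q hq] at this
    linear_combination -this
  -- q-th power criterion
  have φ_zero_iff : ∀ q ∈ S, ∀ u : (ZMod p)ˣ,
      ((dlog u : ℤ) : ZMod q) = 0 ↔ ∃ v : (ZMod p)ˣ, v ^ q = u := by
    intro q hq u
    constructor
    · intro h0
      obtain ⟨m, hm⟩ := (ZMod.intCast_zmod_eq_zero_iff_dvd _ _).mp h0
      refine ⟨g ^ m, ?_⟩
      rw [← hdlog u, hm, ← zpow_natCast, ← zpow_mul, mul_comm]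
    · rintro ⟨v, rfl⟩
      have h1 : g ^ dlog (v ^ q) = g ^ ((q : ℤ) * dlog v) := by
        rw [hdlog, mul_comm, zpow_mul, hdlog, zpow_natCast]
      have := key q hq _ _ h1
      rw [this]; push_cast; simp
  -- residue criterion
  have residue_iff : ∀ q ∈ S, ∀ (x : ℤ) (u : (ZMod p)ˣ), ((u : ZMod p) = (x : ZMod p)) →
      (IsResidue p q x ↔ ∃ v : (ZMod p)ˣ, v ^ q = u) := by
    intro q hq x u hu
    have hq2 : q ≠ 0 := (hq_prime q hq).pos.ne'
    constructor
    · rintro ⟨m, hm⟩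
      have hmx : ((m : ZMod p)) ^ q = (x : ZMod p) := by
        have h := (ZMod.intCast_eq_intCast_iff _ _ _).mpr hm
        push_cast at h
        exact h
      have hm0 : (m : ZMod p) ≠ 0 := by
        intro h
        rw [h, zero_pow hq2] at hmx
        exact Units.ne_zero u (by rw [hu, ← hmx])
      refine ⟨(Ne.isUnit hm0).unit, Units.ext ?_⟩
      rw [Units.val_pow_eq_pow_val, IsUnit.unit_spec, hmx, hu]
    · rintro ⟨v, hv⟩
      refine ⟨((v : ZMod p).val : ℤ), ?_⟩
      rw [← ZMod.intCast_eq_intCast_iff]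
      push_cast
      rw [ZMod.natCast_rightInverse (v : ZMod p), ← hu, ← hv, Units.val_pow_eq_pow_val]
  -- units for n and the d i
  have hn0 : ((n : ℕ) : ZMod p) ≠ 0 := by
    intro h
    exact hpn (Int.natCast_dvd_natCast.mpr ((ZMod.natCast_eq_zero_iff _ _).mp h))
  have hd0 : ∀ i, i < t → ((d i : ZMod p) ≠ 0) := by
    intro i hi h
    have h1 : p ∣ d i := (ZMod.natCast_eq_zero_iff _ _).mp h
    exact hpn (Int.natCast_dvd_natCast.mpr (h1.trans (hdvd i hi)))
  set un : (ZMod p)ˣ := (Ne.isUnit hn0).unit with hun_def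
  have hun : (un : ZMod p) = (n : ZMod p) := IsUnit.unit_spec _
  have hud' : ∀ i, ∃ u : (ZMod p)ˣ, (i < t → (u : ZMod p) = (d i : ZMod p)) := by
    intro i
    by_cases h : i < t
    · exact ⟨(Ne.isUnit (hd0 i h)).unit, fun _ => IsUnit.unit_spec _⟩
    · exact ⟨1, fun h' => absurd h' h⟩
  choose ud hud using hud'
  -- α ≠ 0
  have hα : ∀ q ∈ S, ((dlog un : ℤ) : ZMod q) ≠ 0 := by
    intro q hq h0
    obtain ⟨v, hv⟩ := (φ_zero_iff q hq un).mp h0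
    refine (hnon q hq).2 ((residue_iff q hq (n : ℤ) un ?_).mpr ⟨v, hv⟩)
    rw [hun]; push_cast; rfl
  by_contra hcon
  push_neg at hcon
  -- every pair is bad for some q
  have hbad : ∀ i j, i < j → j < t → ∃ q ∈ S,
      ((dlog (ud j) : ℤ) : ZMod q) = ((dlog (ud i) : ℤ) : ZMod q) + ((dlog un : ℤ) : ZMod q) := by
    intro i j hij hjt
    obtain ⟨q, hq, hnr⟩ := hcon i j hij hjt
    have hit : i < t := hij.trans hjt
    -- the image of m = n * d i / d j
    have hdj : d j ∣ n * d i := Dvd.dvd.mul_right (hdvd j hjt) (d i)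
    have hmc : (n * d i / d j) * d j = n * d i := Nat.div_mul_cancel hdj
    have h2 : ((n * d i / d j : ℕ) : ZMod p) * (d j : ZMod p) = (n : ZMod p) * (d i : ZMod p) := by
      exact_mod_cast congrArg (Nat.cast : ℕ → ZMod p) hmc
    have himg : ((n * d i / d j : ℕ) : ZMod p) = ((un * ud i * (ud j)⁻¹ : (ZMod p)ˣ) : ZMod p) := by
      push_cast
      rw [hun, hud i hit, hud j hjt]
      rw [eq_mul_inv_iff_mul_eq₀ (hd0 j hjt)]
      exact h2
    have hm0 : ((n * d i / d j : ℕ) : ZMod p) ≠ 0 := by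
      rw [himg]; exact Units.ne_zero _
    have hpm : ¬ (p : ℤ) ∣ ((n * d i / d j : ℕ) : ℤ) := by
      intro hdvd'
      apply hm0
      have : p ∣ (n * d i / d j) := Int.natCast_dvd_natCast.mp hdvd'
      exact (ZMod.natCast_eq_zero_iff _ _).mpr this
    rw [IsNonresidue, not_and_or] at hnr
    rcases hnr with h | h
    · exact absurd (not_not.mp h) hpm
    · obtain ⟨v, hv⟩ := (residue_iff q hq ((n * d i / d j : ℕ) : ℤ) (un * ud i * (ud j)⁻¹)
        (by rw [Int.cast_natCast]; exact himg.symm)).mp (not_not.mp h)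
      have h0 : ((dlog (un * ud i * (ud j)⁻¹) : ℤ) : ZMod q) = 0 :=
        (φ_zero_iff q hq _).mpr ⟨v, hv⟩
      rw [φ_mul q hq, φ_mul q hq, φ_inv q hq] at h0
      use q, hq
      linear_combination -h0
  -- counting setup
  set w : ℕ → ℕ := fun q => if 2 < q then (q - 1) / 2 else 1 with hw_def
  have hw1 : ∀ q ∈ S, 1 ≤ w q := by
    intro q hq
    have h2 := (hq_prime q hq).two_le
    simp only [hw_def]
    split <;> omega
  have hw2 : ∀ q ∈ S, 2 * w q ≤ q := by
    intro q hq
    have h2 := (hq_prime q hq).two_le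
    have hodd : 2 < q → q % 2 = 1 := fun h =>
      Nat.odd_iff.mp ((hq_prime q hq).odd_of_ne_two (by omega))
    simp only [hw_def]
    split
    · rename_i h; have := hodd h; omega
    · omega
  haveI instNZ : ∀ q : {x // x ∈ S}, NeZero ((q : ℕ)) := fun q => ⟨(hq_prime q q.2).pos.ne'⟩
  set B : (q : {x // x ∈ S}) → ℕ → Finset (ZMod (q:ℕ)) := fun q i =>
    (Finset.range (w (q:ℕ))).image
      (fun k => ((dlog (ud i) : ℤ) : ZMod (q:ℕ))
        - ((2 * k : ℕ) : ZMod (q:ℕ)) * ((dlog un : ℤ) : ZMod (q:ℕ))) with hB_def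
  set A : ℕ → Finset (∀ q : {x // x ∈ S}, ZMod (q:ℕ)) :=
    fun i => Fintype.piFinset (fun q => B q i) with hA_def
  have hcardB : ∀ (q : {x // x ∈ S}) (i : ℕ), (B q i).card = w (q:ℕ) := by
    intro q i
    rw [hB_def]
    rw [Finset.card_image_of_injOn, Finset.card_range]
    intro k hk k' hk' hkk
    simp only [Finset.coe_range, Set.mem_Iio] at hk hk'
    haveI := Fact.mk (hq_prime q q.2)
    have e1 : ((2*k:ℕ) : ZMod (q:ℕ)) * ((dlog un : ℤ) : ZMod (q:ℕ))
        = ((2*k':ℕ) : ZMod (q:ℕ)) * ((dlog un : ℤ) : ZMod (q:ℕ)) := by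
      linear_combination -hkk
    have e2 : ((2*k:ℕ) : ZMod (q:ℕ)) = ((2*k':ℕ) : ZMod (q:ℕ)) :=
      mul_right_cancel₀ (hα q q.2) e1
    have e3 := (ZMod.natCast_eq_natCast_iff _ _ _).mp e2
    have hb := hw2 q q.2
    rw [Nat.ModEq, Nat.mod_eq_of_lt (by omega), Nat.mod_eq_of_lt (by omega)] at e3
    omega
  have hcardA : ∀ i : ℕ, (A i).card = ∏ q : {x // x ∈ S}, w (q:ℕ) := by
    intro i
    rw [hA_def, Fintype.card_piFinset]
    exact Finset.prod_congr rfl (fun q _ => hcardB q i)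
  have hdisj : ∀ i ∈ Finset.range t, ∀ j ∈ Finset.range t, i ≠ j → Disjoint (A i) (A j) := by
    have main : ∀ i j, i < j → j < t → Disjoint (A i) (A j) := by
      intro i j hij hjt
      rw [Finset.disjoint_left]
      intro s hsi hsj
      rw [hA_def, Fintype.mem_piFinset] at hsi hsj
      obtain ⟨q', hq', hrel⟩ := hbad i j hij hjt
      have h1 := hsi ⟨q', hq'⟩
      have h2 := hsj ⟨q', hq'⟩
      rw [hB_def] at h1 h2
      simp only [Finset.mem_image, Finset.mem_range] at h1 h2
      obtain ⟨k, hk, hk2⟩ := h1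
      obtain ⟨k', hk', hk2'⟩ := h2
      haveI := Fact.mk (hq_prime q' hq')
      have e1 : ((2*k':ℕ) : ZMod q') * ((dlog un : ℤ) : ZMod q')
          = ((2*k+1:ℕ) : ZMod q') * ((dlog un : ℤ) : ZMod q') := by
        push_cast at hk2 hk2' ⊢
        linear_combination hk2 - hk2' + hrel
      have e2 : ((2*k':ℕ) : ZMod q') = ((2*k+1:ℕ) : ZMod q') :=
        mul_right_cancel₀ (hα q' hq') e1
      have e3 := (ZMod.natCast_eq_natCast_iff _ _ _).mp e2
      have hb := hw2 q' hq'
      rw [Nat.ModEq, Nat.mod_eq_of_lt (by omega), Nat.mod_eq_of_lt (by omega)] at e3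
      omega
    intro i hi j hj hij
    rcases lt_trichotomy i j with h | h | h
    · exact main i j h (Finset.mem_range.mp hj)
    · exact absurd h hij
    · exact (main j i h (Finset.mem_range.mp hi)).symm
  have hcount : t * ∏ q : {x // x ∈ S}, w (q:ℕ) ≤ ∏ q : {x // x ∈ S}, (q : ℕ) := by
    calc t * ∏ q : {x // x ∈ S}, w (q:ℕ)
        = ∑ i ∈ Finset.range t, (A i).card := by
          rw [Finset.sum_congr rfl (fun i _ => hcardA i), Finset.sum_const,
            Finset.card_range, smul_eq_mul]
      _ = ((Finset.range t).biUnion A).card := (Finset.card_biUnion hdisj).symm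
      _ ≤ (Finset.univ : Finset (∀ q : {x // x ∈ S}, ZMod (q:ℕ))).card := Finset.card_le_univ _
      _ = ∏ q : {x // x ∈ S}, (q : ℕ) := by
          rw [Finset.card_univ, Fintype.card_pi]
          exact Finset.prod_congr rfl (fun q _ => ZMod.card _)
  have hWS : (∏ q : {x // x ∈ S}, w (q:ℕ)) = ∏ q ∈ S, w q := by
    rw [Finset.univ_eq_attach, Finset.prod_attach]
  have hQS : (∏ q : {x // x ∈ S}, ((q:ℕ))) = ∏ q ∈ S, q := by
    rw [Finset.univ_eq_attach]
    simpa using Finset.prod_attach S (fun x => x)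
  have hreal : ∀ q ∈ S, (q : ℝ) = (2 * if 2 < q then (q:ℝ)/((q:ℝ)-1) else 1) * (w q : ℝ) := by
    intro q hq
    have hq2 := (hq_prime q hq).two_le
    by_cases h : 2 < q
    · have hodd : q % 2 = 1 := Nat.odd_iff.mp ((hq_prime q hq).odd_of_ne_two (by omega))
      have hwq : 2 * w q = q - 1 := by simp only [hw_def]; rw [if_pos h]; omega
      have hcast : 2 * (w q : ℝ) = (q : ℝ) - 1 := by
        have hc := congrArg (Nat.cast : ℕ → ℝ) hwq
        push_cast at hc
        rw [Nat.cast_sub (by omega : 1 ≤ q)] at hc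
        push_cast at hc
        linarith
      have hq1 : (q:ℝ) - 1 ≠ 0 := by
        have : (2:ℝ) < q := by exact_mod_cast h
        linarith
      rw [if_pos h]
      have expand : (2:ℝ) * ((q:ℝ)/((q:ℝ)-1)) * (w q : ℝ)
          = (q:ℝ)/((q:ℝ)-1) * (2 * (w q : ℝ)) := by ring
      rw [expand, hcast, div_mul_cancel₀ _ hq1]
    · have hq2' : q = 2 := by omega
      subst hq2'
      norm_num [hw_def]
  have hBW : (∏ q ∈ S, (q:ℝ))
      = ((2:ℝ) ^ S.card * ∏ q ∈ S.filter (fun q => 2 < q), (q:ℝ)/((q:ℝ)-1))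
        * (∏ q ∈ S, (w q : ℝ)) := by
    rw [Finset.prod_filter, ← Finset.prod_const, ← Finset.prod_mul_distrib,
      ← Finset.prod_mul_distrib]
    exact Finset.prod_congr rfl (fun q hq => hreal q hq)
  have hcast_count : (t : ℝ) * (∏ q ∈ S, (w q : ℝ)) ≤ ∏ q ∈ S, (q : ℝ) := by
    have hc := hcount
    rw [hWS, hQS] at hc
    have hc2 := (Nat.cast_le (α := ℝ)).mpr hc
    push_cast at hc2
    exact hc2
  have hWpos : (0:ℝ) < ∏ q ∈ S, (w q : ℝ) :=
    Finset.prod_pos (fun q hq => by exact_mod_cast hw1 q hq)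
  rw [hBW] at hcast_count
  have hfin := le_of_mul_le_mul_right hcast_count hWpos
  linarith
end

section
/- Let p be a prime and let Q_0, Q_1, …, Q_k be pairwise disjoint sets of prime divisors of p − 1. For i = 0, 1, …, k let m_i = ∏_{q ∈ Q_i} q, and suppose n_i is an integer not divisible by p such that (a) n_i is a q-th power nonresidue modulo p for every prime q ∈ Q_i, and (b) n_i is a q-th power residue modulo p for every prime q ∈ Q_0 ∪ ⋯ ∪ Q_{i−1}. Then there exist integers a_1, …, a_k with 0 ≤ a_i < J(m_i) for each i, such that n_0 · n_1^{a_1} · n_2^{a_2} ⋯ n_k^{a_k} is a q-th power nonresidue modulo p for every prime q ∈ Q_0 ∪ Q_1 ∪ ⋯ ∪ Q_k. -/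
/-!
Write `n_i = g ^ e_i` for a generator `g` of `(ZMod p)ˣ`. For a prime `q ∣ p - 1`, `g ^ e` is a
`q`-th power residue exactly when `q ∣ e`, so the hypotheses say that `e_i` is prime to every
`q ∈ Q_i` and divisible by every `q ∈ Q_j` with `j < i`, and we need exponents making
`∑ a_j e_j` prime to every `q ∈ Q_0 ∪ ⋯ ∪ Q_k`. Choose `a_1, a_2, …` in turn: the new term
`a_i e_i` does not change the sum modulo the primes of earlier blocks, and since `e_i` is a unit
modulo `m_i`, the running sum `S` satisfies `a e_i + S ≡ e_i (a + t) (mod m_i)` for some `t`, while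
among `J(m_i)` consecutive values of `a + t` one is prime to `m_i`.
-/

open Real Finset

/-- Jacobsthal's function: the smallest positive integer `J` such that every set of `J`
consecutive integers contains an integer coprime to `m`. -/
noncomputable def jacobsthal (m : ℕ) : ℕ :=
  sInf {J : ℕ | 0 < J ∧ ∀ a : ℤ, ∃ b : ℤ, a ≤ b ∧ b < a + J ∧ Int.gcd b (m : ℤ) = 1}

theorem exists_coprime_mem_Ico_jacobsthal {m : ℕ} (hm : 0 < m) (c : ℕ) :
    ∃ b, c ≤ b ∧ b < c + jacobsthal m ∧ b.Coprime m := by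
  -- among any `m` consecutive integers one is `≡ 1 [ZMOD m]`, so the defining set is nonempty
  have hm_mem : m ∈ {J : ℕ | 0 < J ∧ ∀ a : ℤ, ∃ b : ℤ, a ≤ b ∧ b < a + J ∧
      Int.gcd b (m : ℤ) = 1} := by
    refine ⟨hm, fun a => ⟨a + (1 - a) % m, ?_, ?_, ?_⟩⟩
    · linarith [Int.emod_nonneg (1 - a) (Int.natCast_ne_zero.mpr hm.ne')]
    · linarith [Int.emod_lt_of_pos (1 - a) (Int.natCast_pos.mpr hm)]
    · refine Int.isCoprime_iff_gcd_eq_one.mp ⟨1, (1 - a) / m, ?_⟩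
      linear_combination Int.emod_def (1 - a) m
  unfold jacobsthal
  obtain ⟨b, hcb, hb, hgcd⟩ := (Nat.sInf_mem ⟨m, hm_mem⟩).2 c
  lift b to ℕ using by omega
  exact ⟨b, by omega, by omega, by rwa [Int.gcd_natCast_natCast] at hgcd⟩

theorem exists_lt_jacobsthal_coprime_mul_add {m e : ℕ} (hm : 0 < m) (he : e.Coprime m) (S : ℕ) :
    ∃ a < jacobsthal m, (a * e + S).Coprime m := by
  obtain ⟨t, -, ht⟩ := Nat.exists_mul_mod_eq_of_coprime S he hm.ne'
  obtain ⟨b, htb, hb, hbm⟩ := exists_coprime_mem_Ico_jacobsthal hm t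
  refine ⟨b - t, by omega, ?_⟩
  have hmod : (b - t) * e + S ≡ e * b [MOD m] := by
    calc (b - t) * e + S ≡ (b - t) * e + e * t [MOD m] := Nat.ModEq.add_left _ ht.symm
      _ = e * b := by rw [mul_comm, ← mul_add, Nat.sub_add_cancel htb]
  exact Nat.coprime_iff_gcd_eq_one.mpr (hmod.gcd_eq.trans (Nat.Coprime.mul_left he hbm))

theorem coprime_prod_primes_iff {x : ℕ} {Q : Finset ℕ} (hQ : ∀ q ∈ Q, q.Prime) :
    x.Coprime (∏ q ∈ Q, q) ↔ ∀ q ∈ Q, ¬ q ∣ x := by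
  rw [Nat.coprime_prod_right_iff]
  exact forall₂_congr fun q hq => by rw [Nat.coprime_comm, (hQ q hq).coprime_iff_not_dvd]

theorem exists_exponents_not_dvd_sum {k : ℕ} (Q : Fin (k + 1) → Finset ℕ)
    (hQ : ∀ i, ∀ q ∈ Q i, q.Prime) (e : Fin (k + 1) → ℕ)
    (hA : ∀ i, ∀ q ∈ Q i, ¬ q ∣ e i) (hB : ∀ i j, j < i → ∀ q ∈ Q j, q ∣ e i) :
    ∃ a : Fin (k + 1) → ℕ, a 0 = 1 ∧
      (∀ i : Fin (k + 1), 0 < (i : ℕ) → a i < jacobsthal (∏ q ∈ Q i, q)) ∧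
      ∀ i, ∀ q ∈ Q i, ¬ q ∣ ∑ j, a j * e j := by
  induction k with
  | zero =>
    refine ⟨fun _ => 1, rfl, fun i hi => absurd hi (by omega), fun i q hq => ?_⟩
    simpa [Fin.fin_one_eq_zero i] using hA i q hq
  | succ k ih =>
    obtain ⟨a, ha0, ha_lt, ha_sum⟩ := ih (Q ∘ Fin.castSucc) (fun i => hQ _) (e ∘ Fin.castSucc)
      (fun i => hA _) (fun i j hji => hB _ _ (Fin.castSucc_lt_castSucc_iff.mpr hji))
    set S := ∑ j, a j * e j.castSucc
    have he_last : (e (Fin.last _)).Coprime (∏ q ∈ Q (Fin.last _), q) :=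
      (coprime_prod_primes_iff (hQ _)).mpr (hA _)
    obtain ⟨c, hc, hcS⟩ := exists_lt_jacobsthal_coprime_mul_add
      (prod_pos fun q hq => (hQ _ q hq).pos) he_last S
    have hsum : ∑ j, (Fin.snoc a c : Fin (k + 2) → ℕ) j * e j = S + c * e (Fin.last _) := by
      simp [Fin.sum_univ_castSucc, S]
    refine ⟨Fin.snoc a c, ?_, fun i => ?_, fun i => ?_⟩
    · rw [← Fin.castSucc_zero, Fin.snoc_castSucc]
      exact ha0
    · refine Fin.lastCases (fun _ => by simpa using hc) (fun j hj => ?_) i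
      simpa using ha_lt j hj
    · refine Fin.lastCases (fun q hq => ?_) (fun j q hq => ?_) i
      · rw [hsum, add_comm]
        exact (coprime_prod_primes_iff (hQ _)).mp hcS q hq
      · rw [hsum, Nat.dvd_add_left (dvd_mul_of_dvd_right
          (hB _ _ (Fin.castSucc_lt_last j) q hq) c)]
        exact ha_sum j q hq

theorem isResidue_iff_exists_pow_eq {p q : ℕ} {n : ℤ} :
    IsResidue p q n ↔ ∃ x : ZMod p, x ^ q = n := by
  simp only [IsResidue, ← ZMod.intCast_eq_intCast_iff, Int.cast_pow]
  exact (ZMod.intCast_surjective.exists (p := fun x : ZMod p => x ^ q = n)).symm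

theorem exists_pow_eq_val_iff {G₀ : Type*} [GroupWithZero G₀] {q : ℕ} (hq : q ≠ 0) (u : G₀ˣ) :
    (∃ x : G₀, x ^ q = u) ↔ ∃ v : G₀ˣ, v ^ q = u := by
  refine ⟨fun ⟨x, hx⟩ => ?_, fun ⟨v, hv⟩ => ⟨v, by rw [← hv, Units.val_pow_eq_pow_val]⟩⟩
  have hx0 : x ≠ 0 := fun h => u.ne_zero (by rw [← hx, h, zero_pow hq])
  exact ⟨Units.mk0 x hx0, Units.ext (by rw [Units.val_pow_eq_pow_val, Units.val_mk0, hx])⟩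

theorem exists_pow_eq_pow_iff_dvd {G : Type*} [Group G] [Finite G] {g : G}
    (hg : ∀ x, x ∈ Subgroup.zpowers g) {q : ℕ} (hq : q ∣ Nat.card G) (e : ℕ) :
    (∃ v : G, v ^ q = g ^ e) ↔ q ∣ e := by
  refine ⟨fun ⟨v, hv⟩ => ?_, fun ⟨f, hf⟩ => ⟨g ^ f, by rw [← pow_mul, mul_comm, hf]⟩⟩
  obtain ⟨f, rfl⟩ := Subgroup.mem_zpowers_iff.mp (hg v)
  have hfe : f * q ≡ e [ZMOD Nat.card G] := by
    rw [← orderOf_eq_card_of_forall_mem_zpowers hg, ← zpow_eq_zpow_iff_modEq]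
    rwa [zpow_mul, zpow_natCast, zpow_natCast]
  have hq_sub : (q : ℤ) ∣ e - f * q := (Int.natCast_dvd_natCast.mpr hq).trans hfe.dvd
  have hq_e := dvd_add hq_sub (dvd_mul_left (q : ℤ) f)
  rwa [sub_add_cancel, Int.natCast_dvd_natCast] at hq_e

theorem exists_pow_eq_intCast {p : ℕ} [Fact p.Prime] {g : (ZMod p)ˣ}
    (hg : ∀ x, x ∈ Subgroup.zpowers g) {n : ℤ} (hn : ¬ (p : ℤ) ∣ n) :
    ∃ e : ℕ, ((g ^ e : (ZMod p)ˣ) : ZMod p) = n := by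
  have hn0 : (n : ZMod p) ≠ 0 := by rwa [Ne, ZMod.intCast_zmod_eq_zero_iff_dvd]
  obtain ⟨e, he⟩ := (Submonoid.mem_powers_iff _ _).mp
    (mem_powers_iff_mem_zpowers.mpr (hg (Units.mk0 _ hn0)))
  exact ⟨e, by rw [he, Units.val_mk0]⟩

theorem isResidue_iff_dvd {p : ℕ} [Fact p.Prime] {g : (ZMod p)ˣ}
    (hg : ∀ x, x ∈ Subgroup.zpowers g) {q e : ℕ} {n : ℤ} (hq : q ∣ p - 1)
    (hn : ((g ^ e : (ZMod p)ˣ) : ZMod p) = n) : IsResidue p q n ↔ q ∣ e := by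
  have hq0 : q ≠ 0 := ne_zero_of_dvd_ne_zero (by have := (Fact.out : p.Prime).two_le; omega) hq
  rw [isResidue_iff_exists_pow_eq, ← hn, exists_pow_eq_val_iff hq0,
    exists_pow_eq_pow_iff_dvd hg (by rwa [Nat.card_eq_fintype_card, ZMod.card_units])]

theorem isNonresidue_iff_not_dvd {p : ℕ} [Fact p.Prime] {g : (ZMod p)ˣ}
    (hg : ∀ x, x ∈ Subgroup.zpowers g) {q e : ℕ} {n : ℤ} (hq : q ∣ p - 1)
    (hn : ((g ^ e : (ZMod p)ˣ) : ZMod p) = n) : IsNonresidue p q n ↔ ¬ q ∣ e := by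
  rw [IsNonresidue, isResidue_iff_dvd hg hq hn, and_iff_right]
  rw [← ZMod.intCast_zmod_eq_zero_iff_dvd, ← hn]
  exact Units.ne_zero _

theorem nonresidue_for_many_q_general
    (p : ℕ) (hp : p.Prime) (k : ℕ) (Q : Fin (k + 1) → Finset ℕ)
    (hQsub : ∀ i, Q i ⊆ (p - 1).primeFactors)
    (n : Fin (k + 1) → ℤ)
    (hnp : ∀ i, ¬ (p : ℤ) ∣ n i)
    (hA : ∀ i, ∀ q ∈ Q i, IsNonresidue p q (n i))
    (hB : ∀ i j : Fin (k + 1), j < i → ∀ q ∈ Q j, IsResidue p q (n i)) :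
    ∃ a : Fin (k + 1) → ℕ, a 0 = 1 ∧
      (∀ i : Fin (k + 1), 0 < (i : ℕ) → a i < jacobsthal (∏ q ∈ Q i, q)) ∧
      ∀ i, ∀ q ∈ Q i, IsNonresidue p q (∏ j, n j ^ a j) := by
  have : Fact p.Prime := ⟨hp⟩
  obtain ⟨g, hg⟩ := IsCyclic.exists_generator (α := (ZMod p)ˣ)
  have hQ i q (hq : q ∈ Q i) : q.Prime ∧ q ∣ p - 1 :=
    ⟨Nat.prime_of_mem_primeFactors (hQsub i hq), Nat.dvd_of_mem_primeFactors (hQsub i hq)⟩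
  choose e he using fun i => exists_pow_eq_intCast hg (hnp i)
  obtain ⟨a, ha0, ha_lt, ha_sum⟩ := exists_exponents_not_dvd_sum Q (fun i q hq => (hQ i q hq).1) e
    (fun i q hq => (isNonresidue_iff_not_dvd hg (hQ i q hq).2 (he i)).mp (hA i q hq))
    (fun i j hji q hq => (isResidue_iff_dvd hg (hQ j q hq).2 (he i)).mp (hB i j hji q hq))
  have hprod : ((g ^ ∑ j, a j * e j : (ZMod p)ˣ) : ZMod p) = ((∏ j, n j ^ a j : ℤ) : ZMod p) := by
    rw [← prod_pow_eq_pow_sum, Units.coe_prod, Int.cast_prod]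
    refine prod_congr rfl fun j _ => ?_
    rw [mul_comm, pow_mul, Units.val_pow_eq_pow_val, he j, Int.cast_pow]
  exact ⟨a, ha0, ha_lt, fun i q hq =>
    (isNonresidue_iff_not_dvd hg (hQ i q hq).2 hprod).mpr (ha_sum i q hq)⟩

theorem nonresidue_for_many_q
    (p : ℕ) (hp : p.Prime) (k : ℕ) (Q : Fin (k + 1) → Finset ℕ)
    (hQsub : ∀ i, Q i ⊆ (p - 1).primeFactors)
    (hdisj : ∀ i j, i ≠ j → Disjoint (Q i) (Q j))
    (n : Fin (k + 1) → ℤ)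
    (hnp : ∀ i, ¬ (p : ℤ) ∣ n i)
    (hA : ∀ i, ∀ q ∈ Q i, IsNonresidue p q (n i))
    (hB : ∀ i j : Fin (k + 1), j < i → ∀ q ∈ Q j, IsResidue p q (n i)) :
    ∃ a : Fin (k + 1) → ℕ, a 0 = 1 ∧
      (∀ i : Fin (k + 1), 0 < (i : ℕ) → a i < jacobsthal (∏ q ∈ Q i, q)) ∧
      ∀ i, ∀ q ∈ Q i, IsNonresidue p q (∏ j, n j ^ a j) :=
  nonresidue_for_many_q_general p hp k Q hQsub n hnp hA hB
end

section
/- Let p be a prime and let Q_0, Q_1, …, Q_k be pairwise disjoint sets of prime divisors of p − 1 whose union is the set of all prime divisors of p − 1. For i = 0, 1, …, k let m_i = ∏_{q ∈ Q_i} q, and suppose n_i is a positive integer not divisible by p such that (a) n_i is a q-th power nonresidue modulo p for every prime q ∈ Q_i, and (b) n_i is a q-th power residue modulo p for every prime q ∈ Q_0 ∪ ⋯ ∪ Q_{i−1}. Then g(p) ≤ n_0 · ∏_{i=1}^k n_i^{J(m_i) − 1}. -/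
open Real Finset

/-- The least positive integer which is a primitive root modulo `p`. -/
noncomputable def leastPrimRoot (p : ℕ) : ℕ :=
  sInf {n : ℕ | 0 < n ∧ IsPrimitiveRoot (n : ZMod p) (p - 1)}

lemma jacobsthal_mem (m : ℕ) (hm : 0 < m) :
    0 < jacobsthal m ∧ ∀ a : ℤ, ∃ b : ℤ, a ≤ b ∧ b < a + jacobsthal m ∧
      Int.gcd b (m : ℤ) = 1 := by
  have hne : {J : ℕ | 0 < J ∧ ∀ a : ℤ, ∃ b : ℤ, a ≤ b ∧ b < a + J ∧
      Int.gcd b (m : ℤ) = 1}.Nonempty := by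
    refine ⟨m, hm, fun a => ?_⟩
    have hm' : (0 : ℤ) < (m : ℤ) := by exact_mod_cast hm
    refine ⟨a + (1 - a) % m, le_add_of_nonneg_right (Int.emod_nonneg _ hm'.ne'), ?_, ?_⟩
    · have := Int.emod_lt_of_pos (1 - a) hm'
      omega
    · have hb : a + (1 - a) % m = 1 - (m : ℤ) * ((1 - a) / m) := by
        rw [Int.emod_def]; ring
      have : IsCoprime (a + (1 - a) % m) (m : ℤ) :=
        ⟨1, (1 - a) / m, by rw [hb]; ring⟩
      exact Int.isCoprime_iff_gcd_eq_one.mp this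
  exact Nat.sInf_mem hne

theorem primitive_root_bound_from_partition
    (p : ℕ) (hp : p.Prime) (k : ℕ) (Q : Fin (k + 1) → Finset ℕ)
    (hQsub : ∀ i, Q i ⊆ (p - 1).primeFactors)
    (hdisj : ∀ i j, i ≠ j → Disjoint (Q i) (Q j))
    (hcover : (p - 1).primeFactors = Finset.univ.biUnion Q)
    (n : Fin (k + 1) → ℕ)
    (hpos : ∀ i, 0 < n i)
    (hnp : ∀ i, ¬ p ∣ n i)
    (hA : ∀ i, ∀ q ∈ Q i, IsNonresidue p q (n i : ℤ))
    (hB : ∀ i j : Fin (k + 1), j < i → ∀ q ∈ Q j, IsResidue p q (n i : ℤ)) :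
    leastPrimRoot p ≤ n 0 * ∏ i ∈ Finset.univ.erase 0,
      n i ^ (jacobsthal (∏ q ∈ Q i, q) - 1) := by
  haveI : Fact p.Prime := ⟨hp⟩
  have hp2 := hp.two_le
  -- a generator of the unit group
  obtain ⟨g, hg⟩ := IsCyclic.exists_generator (α := (ZMod p)ˣ)
  have hcard : Fintype.card (ZMod p)ˣ = p - 1 := ZMod.card_units p
  have horder : orderOf g = p - 1 := by
    rw [orderOf_eq_card_of_forall_mem_zpowers hg, Nat.card_eq_fintype_card, hcard]
  have hgen : ∀ x : (ZMod p)ˣ, ∃ c : ℕ, g ^ c = x := fun x =>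
    (Submonoid.mem_powers_iff _ _).mp ((mem_powers_iff_mem_zpowers).mpr (hg x))
  -- indices of the n i
  have hcop : ∀ i, Nat.Coprime (n i) p := fun i =>
    Nat.coprime_comm.mp ((hp.coprime_iff_not_dvd).mpr (hnp i))
  set u : Fin (k + 1) → (ZMod p)ˣ := fun i => ZMod.unitOfCoprime (n i) (hcop i) with hu
  choose a ha using fun i => hgen (u i)
  have hucast : ∀ i, ((u i : ZMod p)) = (n i : ZMod p) := fun i =>
    ZMod.coe_unitOfCoprime _ _
  have hqfact : ∀ (l : Fin (k + 1)), ∀ q ∈ Q l, q.Prime ∧ q ∣ (p - 1) := by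
    intro l q hq
    have h := Nat.mem_primeFactors.mp (hQsub l hq)
    exact ⟨h.1, h.2.1⟩
  -- residue iff index divisible
  have hres : ∀ (i : Fin (k + 1)) (q : ℕ), q.Prime → q ∣ (p - 1) →
      (IsResidue p q ((n i : ℤ)) ↔ q ∣ a i) := by
    intro i q hq hqd
    constructor
    · rintro ⟨m, hm⟩
      have hcast : ((m ^ q : ℤ) : ZMod p) = (((n i : ℤ)) : ZMod p) :=
        (ZMod.intCast_eq_intCast_iff _ _ _).mpr hm
      push_cast at hcast
      have hne : ((m : ZMod p)) ≠ 0 := by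
        intro h0
        rw [h0, zero_pow hq.ne_zero] at hcast
        have : ((u i : ZMod p)) ≠ 0 := Units.ne_zero _
        rw [hucast i, ← hcast] at this
        exact this rfl
      have hw : IsUnit ((m : ZMod p)) := isUnit_iff_ne_zero.mpr hne
      obtain ⟨c, hc⟩ := hgen hw.unit
      have hwq : hw.unit ^ q = u i := by
        apply Units.ext
        push_cast
        rw [IsUnit.unit_spec, hcast, ← hucast i]
      have hpow : g ^ (c * q) = g ^ (a i) := by
        rw [pow_mul, hc, hwq, ha i]
      have hmod : c * q ≡ a i [MOD p - 1] := by
        rw [← horder]; exact pow_eq_pow_iff_modEq.mp hpow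
      have hmodq : c * q ≡ a i [MOD q] := Nat.ModEq.of_dvd hqd hmod
      have h0 : 0 ≡ a i [MOD q] :=
        (Nat.modEq_zero_iff_dvd.mpr ⟨c, mul_comm _ _⟩).symm.trans hmodq
      exact (Nat.modEq_zero_iff_dvd.mp h0.symm)
    · rintro ⟨b, hb⟩
      refine ⟨((((g ^ b : (ZMod p)ˣ) : ZMod p)).val : ℤ), ?_⟩
      rw [← ZMod.intCast_eq_intCast_iff]
      push_cast
      rw [ZMod.natCast_val, ZMod.cast_id]
      have h2 : ((g ^ b) ^ q : (ZMod p)ˣ) = u i := by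
        rw [← pow_mul, mul_comm b q, ← hb, ha i]
      calc ((g ^ b : (ZMod p)ˣ) : ZMod p) ^ q
          = (((g ^ b) ^ q : (ZMod p)ˣ) : ZMod p) := (Units.val_pow_eq_pow_val _ _).symm
        _ = ((u i : (ZMod p)ˣ) : ZMod p) := by rw [h2]
        _ = ((n i : ℕ) : ZMod p) := hucast i
  have hAa : ∀ i, ∀ q ∈ Q i, ¬ q ∣ a i := fun i q hq hd =>
    (hA i q hq).2 ((hres i q (hqfact i q hq).1 (hqfact i q hq).2).mpr hd)
  have hBa : ∀ (i j : Fin (k + 1)), j < i → ∀ q ∈ Q j, q ∣ a i := fun i j hij q hq =>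
    (hres i q (hqfact j q hq).1 (hqfact j q hq).2).mp (hB i j hij q hq)
  -- the index of a product
  set Afun : (Fin (k + 1) → ℕ) → ℕ :=
    fun e => a 0 + ∑ i ∈ univ.erase 0, e i * a i with hAfun
  -- main inductive construction
  have key : ∀ j, j ≤ k → ∃ e : Fin (k + 1) → ℕ,
      (∀ i : Fin (k + 1), i.val ≤ j → e i ≤ jacobsthal (∏ q ∈ Q i, q) - 1) ∧
      (∀ i : Fin (k + 1), j < i.val → e i = 0) ∧
      (∀ l : Fin (k + 1), l.val ≤ j → ∀ q ∈ Q l, ¬ q ∣ Afun e) := by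
    intro j
    induction j with
    | zero =>
      intro _
      refine ⟨fun _ => 0, fun i _ => Nat.zero_le _, fun i _ => rfl, ?_⟩
      intro l hl q hq hdvd
      have hl0 : l = 0 := by apply Fin.ext; simp only [Fin.val_zero]; omega
      subst hl0
      have : Afun (fun _ => 0) = a 0 := by simp [hAfun]
      rw [this] at hdvd
      exact hAa 0 q hq hdvd
    | succ j ih =>
      intro hjk
      obtain ⟨e, he1, he2, he3⟩ := ih (by omega)
      set jf : Fin (k + 1) := ⟨j + 1, by omega⟩ with hjf
      set m : ℕ := ∏ q ∈ Q jf, q with hm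
      have hmpos : 0 < m := Finset.prod_pos fun q hq => (hqfact jf q hq).1.pos
      obtain ⟨hJpos, hJ⟩ := jacobsthal_mem m hmpos
      have hjfne : jf ≠ 0 := by simp [hjf, Fin.ext_iff]
      have hjfmem : jf ∈ univ.erase (0 : Fin (k + 1)) :=
        Finset.mem_erase.mpr ⟨hjfne, Finset.mem_univ _⟩
      set S : ℕ := Afun e with hS
      set α : ℕ := a jf with hα
      have hcopmα : Nat.Coprime m α :=
        Nat.Coprime.prod_left fun q hq =>
          ((hqfact jf q hq).1.coprime_iff_not_dvd).mpr (hAa jf q hq)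
      have hcopint : IsCoprime ((m : ℤ)) ((α : ℤ)) := by
        rw [Int.isCoprime_iff_gcd_eq_one]
        exact_mod_cast hcopmα
      obtain ⟨c, d, hcd⟩ := hcopint
      obtain ⟨b, hb1, hb2, hb3⟩ := hJ ((S : ℤ) * d)
      set t : ℕ := (b - S * d).toNat with hT
      have ht : (t : ℤ) = b - S * d := Int.toNat_of_nonneg (by omega)
      have htJ : t < jacobsthal m := by
        have : (t : ℤ) < (jacobsthal m : ℤ) := by omega
        exact_mod_cast this
      set e' : Fin (k + 1) → ℕ := Function.update e jf t with he'
      have hejf : e jf = 0 := he2 jf (by simp [hjf])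
      have hsum : Afun e' = S + t * α := by
        rw [hAfun]
        simp only []
        rw [← Finset.add_sum_erase _ _ hjfmem]
        have hrest : ∑ i ∈ (univ.erase (0 : Fin (k+1))).erase jf, e' i * a i
            = ∑ i ∈ (univ.erase (0 : Fin (k+1))).erase jf, e i * a i := by
          refine Finset.sum_congr rfl fun i hi => ?_
          have : i ≠ jf := (Finset.mem_erase.mp hi).1
          rw [he', Function.update_of_ne this]
        rw [hrest, he', Function.update_self]
        have hSold : S = a 0 + (e jf * a jf + ∑ i ∈ (univ.erase (0 : Fin (k+1))).erase jf,
            e i * a i) := by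
          rw [hS, hAfun]
          simp only []
          rw [← Finset.add_sum_erase _ _ hjfmem]
        rw [hSold, hejf]
        ring
      refine ⟨e', ?_, ?_, ?_⟩
      · intro i hi
        by_cases hij : i = jf
        · subst hij
          rw [he', Function.update_self, ← hm]
          omega
        · have : i.val ≤ j := by
            have : i.val ≠ j + 1 := fun h => hij (Fin.ext (by rw [hjf]; exact h))
            omega
          rw [he', Function.update_of_ne hij]
          exact he1 i this
      · intro i hi
        have hij : i ≠ jf := fun h => by subst h; simp [hjf] at hi
        rw [he', Function.update_of_ne hij]
        exact he2 i (by omega)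
      · intro l hl q hq hdvd
        rw [hsum] at hdvd
        by_cases hlj : l.val ≤ j
        · -- q ∈ Q l, l ≤ j : q ∣ α, q ∤ S
          have hqα : q ∣ α := hBa jf l (by simp [hjf, Fin.lt_def]; omega) q hq
          have : q ∣ S := (Nat.dvd_add_right (Dvd.dvd.mul_left hqα t)).mp
            (by rwa [Nat.add_comm] at hdvd)
          exact he3 l hlj q hq this
        · -- l = jf
          have hlv : l.val = j + 1 := by omega
          have hljf : l = jf := Fin.ext (by rw [hjf]; exact hlv)
          subst hljf
          have hqprime := (hqfact jf q hq).1
          have hqm : (q : ℤ) ∣ (m : ℤ) := by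
            exact_mod_cast Finset.dvd_prod_of_mem _ hq
          have hqS : (q : ℤ) ∣ (S : ℤ) + t * α := by exact_mod_cast hdvd
          have hiden : ((S : ℤ)) + t * α = (S * c) * m + ((S : ℤ) * d + t) * α := by
            have : (1 : ℤ) = c * m + d * α := hcd.symm
            nlinarith [this]
          have hqba : (q : ℤ) ∣ ((S : ℤ) * d + t) * α := by
            have h1 : (q : ℤ) ∣ (S * c) * m := Dvd.dvd.mul_left hqm _
            have h2 := hqS
            rw [hiden] at h2
            exact (dvd_add_right h1).mp h2
          have hqZ : Prime ((q : ℤ)) := Nat.prime_iff_prime_int.mp hqprime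
          rcases hqZ.dvd_mul.mp hqba with h | h
          · have hbq : (q : ℤ) ∣ b := by
              have : (S : ℤ) * d + t = b := by omega
              rwa [this] at h
            have hcb : IsCoprime (b) ((m : ℤ)) := Int.isCoprime_iff_gcd_eq_one.mpr hb3
            have := hcb.isUnit_of_dvd' hbq hqm
            rw [Int.isUnit_iff] at this
            have := hqprime.two_le
            omega
          · have : q ∣ α := by exact_mod_cast h
            exact hAa jf q hq this
  -- conclude
  obtain ⟨e, he1, he2, he3⟩ := key k le_rfl
  have hcopA : Nat.Coprime (p - 1) (Afun e) := by
    by_contra h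
    obtain ⟨q, hq, hq1, hq2⟩ := Nat.Prime.not_coprime_iff_dvd.mp h
    have hqm : q ∈ (p - 1).primeFactors := Nat.mem_primeFactors.mpr ⟨hq, hq1, by omega⟩
    rw [hcover] at hqm
    obtain ⟨l, -, hl⟩ := Finset.mem_biUnion.mp hqm
    exact he3 l (by omega) q hl hq2
  set N : ℕ := n 0 * ∏ i ∈ univ.erase 0, n i ^ e i with hN
  have hNpos : 0 < N :=
    Nat.mul_pos (hpos 0) (Finset.prod_pos fun i _ => pow_pos (hpos i) _)
  have hgA : g ^ Afun e = u 0 * ∏ i ∈ univ.erase 0, (u i) ^ (e i) := by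
    rw [hAfun]
    simp only []
    rw [pow_add, ha 0]
    congr 1
    rw [← Finset.prod_pow_eq_pow_sum]
    exact Finset.prod_congr rfl fun i _ => by
      rw [← ha i, ← pow_mul, mul_comm]
  have hNcast : ((N : ℕ) : ZMod p) = ((g ^ Afun e : (ZMod p)ˣ) : ZMod p) := by
    rw [hgA, hN]
    push_cast
    rw [hucast 0]
    exact congrArg _ (Finset.prod_congr rfl fun i _ => by rw [hucast i])
  have horderN : orderOf ((N : ℕ) : ZMod p) = p - 1 := by
    have hgcd : (p - 1).gcd (Afun e) = 1 := hcopA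
    rw [hNcast, orderOf_units, orderOf_pow, horder, hgcd, Nat.div_one]
  have hprim : IsPrimitiveRoot ((N : ℕ) : ZMod p) (p - 1) := by
    rw [← horderN]; exact IsPrimitiveRoot.orderOf _
  have hle1 : leastPrimRoot p ≤ N := Nat.sInf_le ⟨hNpos, hprim⟩
  refine hle1.trans ?_
  rw [hN]
  refine Nat.mul_le_mul le_rfl (Finset.prod_le_prod' fun i _ => ?_)
  exact Nat.pow_le_pow_right (hpos i) (he1 i (by omega))
end
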